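/- arXiv:2410.23505 — 2 statements merged into one kernel-verified Lean document; each statement's English description precedes it below -/
import Mathlib

section
/- Let d ≥ 2 be an integer, 1 ≤ p ≤ 2, ε ∈ (0,1/2), and R > 0. Let m : [0,∞) → ℂ be integrable, with cosine transform m̂ extended evenly to ℝ. Then there is a constant C = C(p,d,ε), independent of m and R, such that ( ∫_{ε ≤ |t| ≤ 1/2} |R m̂(Rt)|^p dt )^{1/p} ≤ C R^{1/p' − α(p)} C_p(m). -/
/-!
On `ε ≤ |t|` we have `R|t| ≥ εR`, so `⟨Rt⟩^α ≥ (εR)^α` because `α(p) ≥ 0`; hence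
`R |m̂(Rt)| ≤ R (εR)^{-α} ⟨Rt⟩^α |m̂(Rt)|`. Integrating the `p`-th power over all of `ℝ` and
substituting `s = R|t|` produces `2 R⁻¹ C_p(m)^p`, and the `p`-th root of
`2 R⁻¹ (R (εR)^{-α})^p` is `2^{1/p} ε^{-α} R^{1 - 1/p - α}`.
-/

open MeasureTheory Real Set Filter
open scoped ENNReal

noncomputable section

/-- The cosine transform of a function `m : [0,∞) → ℂ`. -/
def cosT (m : ℝ → ℂ) (t : ℝ) : ℂ :=
  ∫ l in Set.Ioi (0 : ℝ), m l * (Real.cos (2 * Real.pi * l * t) : ℂ)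

/-- The even extension of the cosine transform to all of `ℝ`. -/
def cosTE (m : ℝ → ℂ) (t : ℝ) : ℂ := cosT m |t|

/-- The Japanese bracket `⟨t⟩ = (1 + t²)^{1/2}`. -/
def jap (t : ℝ) : ℝ := (1 + t ^ 2) ^ ((1 : ℝ) / 2)

/-- `α(p) = (d−1)(1/p − 1/2)`. -/
def alphaP (d : ℕ) (p : ℝ) : ℝ := ((d : ℝ) - 1) * (1 / p - 1 / 2)

/-- `C_p(m) = ( ∫₀^∞ [ ⟨t⟩^{α(p)} |m̂(t)| ]^p dt )^{1/p}`, as an extended real. -/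
def Cp (d : ℕ) (p : ℝ) (m : ℝ → ℂ) : ℝ≥0∞ :=
  (∫⁻ t in Set.Ioi (0 : ℝ),
      ENNReal.ofReal ((jap t ^ alphaP d p * ‖cosT m t‖) ^ p)) ^ (1 / p)

theorem lintegral_comp_mul_left (f : ℝ → ℝ≥0∞) {c : ℝ} (hc : c ≠ 0) :
    ∫⁻ x, f (c * x) = ENNReal.ofReal |c⁻¹| * ∫⁻ y, f y := by
  rw [← (measurableEmbedding_mulLeft₀ hc).lintegral_map, Real.map_volume_mul_left hc,
    lintegral_smul_measure, smul_eq_mul]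

theorem lintegral_comp_abs (f : ℝ → ℝ≥0∞) :
    ∫⁻ x, f |x| = 2 * ∫⁻ x in Ioi 0, f x := by
  have hneg : ∫⁻ x in Iio 0, f |x| = ∫⁻ x in Ioi 0, f x := by
    rw [setLIntegral_congr_fun measurableSet_Iio fun x hx => by rw [abs_of_neg hx]]
    simpa using (Measure.measurePreserving_neg (volume : Measure ℝ)).setLIntegral_comp_preimage_emb
      (Homeomorph.neg ℝ).measurableEmbedding f (Ioi 0)
  have hnonneg : ∫⁻ x in Ici 0, f |x| = ∫⁻ x in Ioi 0, f x := by
    rw [setLIntegral_congr_fun measurableSet_Ici fun x hx => by rw [abs_of_nonneg hx]]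
    exact setLIntegral_congr Ioi_ae_eq_Ici.symm
  rw [← setLIntegral_univ, ← Iio_union_Ici, lintegral_union measurableSet_Ici
    (Iio_disjoint_Ici le_rfl), hneg, hnonneg, two_mul]

lemma jap_pos (t : ℝ) : 0 < jap t := Real.rpow_pos_of_pos (by positivity) _

lemma abs_le_jap (t : ℝ) : |t| ≤ jap t := by
  rw [jap, ← Real.sqrt_eq_rpow, ← Real.sqrt_sq_eq_abs]
  exact Real.sqrt_le_sqrt (by linarith)

lemma alphaP_nonneg {d : ℕ} (hd : 1 ≤ d) {p : ℝ} (hp0 : 0 < p) (hp2 : p ≤ 2) :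
    0 ≤ alphaP d p := by
  have hd' : (1 : ℝ) ≤ d := by exact_mod_cast hd
  have hp' : (1 : ℝ) / 2 ≤ 1 / p := one_div_le_one_div_of_le hp0 hp2
  exact mul_nonneg (by linarith) (by linarith)

lemma le_rpow_neg_mul_jap_rpow_mul {α a s x : ℝ} (hα : 0 ≤ α) (ha : 0 < a) (hs : a ≤ |s|)
    (hx : 0 ≤ x) : x ≤ a ^ (-α) * (jap s ^ α * x) := by
  have hjap : a ^ α ≤ jap s ^ α :=
    Real.rpow_le_rpow ha.le (hs.trans (abs_le_jap s)) hα
  rw [Real.rpow_neg ha.le, ← mul_assoc, inv_mul_eq_div]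
  exact le_mul_of_one_le_left hx ((one_le_div (by positivity)).mpr hjap)

def weightedTransformPow (d : ℕ) (p : ℝ) (m : ℝ → ℂ) (s : ℝ) : ℝ≥0∞ :=
  ENNReal.ofReal ((jap s ^ alphaP d p * ‖cosT m s‖) ^ p)

lemma weightedTransformPow_comp_scale {d : ℕ} {p ε R : ℝ} (hα : 0 ≤ alphaP d p) (hp0 : 0 < p)
    (hε : 0 < ε) (hR : 0 < R) (m : ℝ → ℂ) {t : ℝ} (ht : ε ≤ |t|) :
    ENNReal.ofReal ((R * ‖cosTE m (R * t)‖) ^ p) ≤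
      ENNReal.ofReal ((R * (ε * R) ^ (-alphaP d p)) ^ p) *
        weightedTransformPow d p m |R * t| := by
  have hRt : ε * R ≤ |(|R * t|)| := by
    rw [abs_abs, abs_mul, abs_of_pos hR, mul_comm ε]
    exact mul_le_mul_of_nonneg_left ht hR.le
  have hbound := le_rpow_neg_mul_jap_rpow_mul hα (by positivity) hRt (norm_nonneg (cosT m |R * t|))
  rw [cosTE, weightedTransformPow, ← ENNReal.ofReal_mul (by positivity),
    ← Real.mul_rpow (by positivity) (by have := jap_pos |R * t|; positivity)]
  refine ENNReal.ofReal_le_ofReal (Real.rpow_le_rpow (by positivity) ?_ hp0.le)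
  rw [mul_assoc]
  exact mul_le_mul_of_nonneg_left hbound hR.le

lemma lintegral_abs_ge_scaled_transform_le {d : ℕ} {p ε R : ℝ} (hα : 0 ≤ alphaP d p)
    (hp0 : 0 < p) (hε : 0 < ε) (hR : 0 < R) (m : ℝ → ℂ) :
    ∫⁻ t in {t : ℝ | ε ≤ |t|}, ENNReal.ofReal ((R * ‖cosTE m (R * t)‖) ^ p) ≤
      2 * ENNReal.ofReal ((R * (ε * R) ^ (-alphaP d p)) ^ p) * ENNReal.ofReal R⁻¹ *
        ∫⁻ s in Ioi 0, weightedTransformPow d p m s := by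
  set K := ENNReal.ofReal ((R * (ε * R) ^ (-alphaP d p)) ^ p)
  calc _ ≤ ∫⁻ t in {t : ℝ | ε ≤ |t|}, K * weightedTransformPow d p m |R * t| :=
        setLIntegral_mono' (measurableSet_le measurable_const measurable_abs)
          fun t ht => weightedTransformPow_comp_scale hα hp0 hε hR m ht
    _ ≤ ∫⁻ t, K * weightedTransformPow d p m |R * t| := setLIntegral_le_lintegral _ _
    _ = 2 * K * ENNReal.ofReal R⁻¹ * ∫⁻ s in Ioi 0, weightedTransformPow d p m s := by
        rw [lintegral_const_mul' _ _ ENNReal.ofReal_ne_top,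
          lintegral_comp_mul_left (fun s => weightedTransformPow d p m |s|) hR.ne',
          lintegral_comp_abs, abs_of_pos (inv_pos.mpr hR)]
        ring

lemma rpow_constant_eq {p α ε R : ℝ} (hp : 0 < p) (hε : 0 < ε) (hR : 0 < R) :
    (2 * (R * (ε * R) ^ (-α)) ^ p * R⁻¹) ^ (1 / p)
      = 2 ^ (1 / p) * ε ^ (-α) * R ^ (1 - 1 / p - α) := by
  rw [Real.mul_rpow (by positivity) (by positivity), Real.mul_rpow (by positivity) (by positivity),
    one_div, Real.rpow_rpow_inv (by positivity) hp.ne', Real.inv_rpow hR.le,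
    Real.mul_rpow hε.le hR.le, Real.rpow_sub hR, Real.rpow_sub hR, Real.rpow_one,
    Real.rpow_neg hR.le]
  field_simp

/-- For `d ≥ 2`, `1 ≤ p ≤ 2`, `ε ∈ (0,1/2)`: there is `C = C(p,d,ε)`, independent of `m`
and `R`, so that `( ∫_{ε ≤ |t| ≤ 1/2} |R m̂(Rt)|^p dt )^{1/p} ≤ C R^{1/p' − α(p)} C_p(m)`. -/
theorem statement6 (d : ℕ) (hd : 2 ≤ d) (p : ℝ) (hp1 : 1 ≤ p) (hp2 : p ≤ 2)
    (ε : ℝ) (hε : ε ∈ Set.Ioo (0 : ℝ) (1 / 2)) :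
    ∃ C : ℝ, 0 < C ∧
      ∀ R : ℝ, 0 < R →
        ∀ m : ℝ → ℂ, IntegrableOn m (Set.Ici 0) →
          (∫⁻ t in {t : ℝ | ε ≤ |t| ∧ |t| ≤ 1 / 2},
              ENNReal.ofReal ((R * ‖cosTE m (R * t)‖) ^ p)) ^ (1 / p) ≤
            ENNReal.ofReal (C * R ^ (1 - 1 / p - alphaP d p)) * Cp d p m := by
  obtain ⟨hε0, -⟩ := hε
  have hp0 : 0 < p := by linarith
  have hα := alphaP_nonneg (d := d) (by omega) hp0 hp2
  refine ⟨2 ^ (1 / p) * ε ^ (-alphaP d p), by positivity, fun R hR m _ => ?_⟩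
  calc _ ≤ (2 * ENNReal.ofReal ((R * (ε * R) ^ (-alphaP d p)) ^ p) * ENNReal.ofReal R⁻¹ *
          ∫⁻ s in Ioi 0, weightedTransformPow d p m s) ^ (1 / p) := by
        gcongr
        exact (lintegral_mono_set fun t ht => ht.1).trans
          (lintegral_abs_ge_scaled_transform_le hα hp0 hε0 hR m)
    _ = ENNReal.ofReal (2 ^ (1 / p) * ε ^ (-alphaP d p) * R ^ (1 - 1 / p - alphaP d p)) *
          Cp d p m := by
        rw [ENNReal.mul_rpow_of_nonneg _ _ (by positivity), ← ENNReal.ofReal_ofNat 2,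
          ← ENNReal.ofReal_mul (by norm_num), ← ENNReal.ofReal_mul (by positivity),
          ENNReal.ofReal_rpow_of_pos (by positivity), rpow_constant_eq hp0 hε0 hR]
        rfl
end
end

section
/- Let d ≥ 1 and let p : ℝ^d ∖ {0} → (0,∞) be twice continuously differentiable and positively homogeneous of degree 1. Let ξ₀ ∈ ℝ^d with p(ξ₀) = 1, set H = (1/2)∇²(p²)(ξ₀), and let A ≥ 1 be such that ⟨H w, w⟩ ≥ A^{−1}|w|² for all w ∈ ℝ^d. Let ε > 0 and let ξ : (−ε, ε) → ℝ^d ∖ {0} be a twice differentiable curve with p(ξ(a)) = 1 for all a and ξ(0) = ξ₀, and define c(a) = ⟨H ξ₀, ξ(a)⟩. Then c(0) = 1, c'(0) = 0, and c''(0) ≤ −A^{−1} |ξ'(0)|². -/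
/-!
Put `q = p²`, which is positively homogeneous of degree 2 away from the origin. Euler's relation
gives `Dq(x) x = 2 q(x)`, and since `Dq` is homogeneous of degree 1, also `D²q(x) x = Dq(x)`.
Hence `H ξ₀ = ½ Dq(ξ₀)` and `c(a) = ½ Dq(ξ₀)(ξ(a))` is the restriction of a linear functional to
the curve, so `c(0) = q(ξ₀) = 1`. Differentiating `q(ξ(a)) = 1` once gives
`Dq(ξ a)(ξ' a) = 0`, whence `c'(0) = 0`; differentiating again at `0` gives
`D²q(ξ₀)(ξ'0, ξ'0) + Dq(ξ₀)(ξ''0) = 0`, so `c''(0) = -⟨H ξ'0, ξ'0⟩ ≤ -A⁻¹|ξ'0|²`.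
-/

open Set Filter Topology

section Calculus

variable {E F : Type*} [NormedAddCommGroup E] [NormedSpace ℝ E]
  [NormedAddCommGroup F] [NormedSpace ℝ F]

theorem fderiv_apply_self_of_homogeneous {f : E → F} {x : E} {r : ℝ}
    (hf : DifferentiableAt ℝ f x) (hhom : ∀ s : ℝ, 0 < s → f (s • x) = s ^ r • f x) :
    fderiv ℝ f x x = r • f x := by
  have hray : HasDerivAt (fun s : ℝ => f (s • x)) (fderiv ℝ f x x) 1 := by
    simpa [Function.comp_def] using hf.hasFDerivAt.comp_hasDerivAt_of_eq (1 : ℝ)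
      ((hasDerivAt_id (1 : ℝ)).smul_const x) (by simp)
  have hpow : HasDerivAt (fun s : ℝ => s ^ r • f x) (r • f x) 1 := by
    simpa using (Real.hasDerivAt_rpow_const (Or.inl one_ne_zero)).smul_const (f x)
  have hray_eq : (fun s : ℝ => f (s • x)) =ᶠ[𝓝 1] fun s => s ^ r • f x := by
    filter_upwards [lt_mem_nhds one_pos] with s hs using hhom s hs
  exact hray.unique (hpow.congr_of_eventuallyEq hray_eq)

theorem fderiv_smul_of_homogeneous {f : E → F} {r : ℝ}
    (hhom : ∀ s : ℝ, 0 < s → ∀ y ≠ (0 : E), f (s • y) = s ^ r • f y)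
    {s : ℝ} (hs : 0 < s) {x : E} (hx : x ≠ 0) :
    fderiv ℝ f (s • x) = s ^ (r - 1) • fderiv ℝ f x := by
  have hscaled : fderiv ℝ (fun y => f (s • y)) x = s ^ r • fderiv ℝ f x := by
    have hloc : (fun y => f (s • y)) =ᶠ[𝓝 x] s ^ r • f := by
      filter_upwards [isOpen_ne.mem_nhds hx] with y hy using hhom s hs y hy
    rw [hloc.fderiv_eq, fderiv_const_smul_field, Pi.smul_apply]
  rw [fderiv_comp_smul] at hscaled
  rw [Real.rpow_sub_one hs.ne', div_eq_inv_mul, mul_smul, ← hscaled, inv_smul_smul₀ hs.ne']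

theorem fderiv_fderiv_apply_self_of_homogeneous {f : E → F} {r : ℝ}
    (hhom : ∀ s : ℝ, 0 < s → ∀ y ≠ (0 : E), f (s • y) = s ^ r • f y)
    {x : E} (hx : x ≠ 0) (hf : DifferentiableAt ℝ (fderiv ℝ f) x) :
    fderiv ℝ (fderiv ℝ f) x x = (r - 1) • fderiv ℝ f x :=
  fderiv_apply_self_of_homogeneous hf fun _ hs => fderiv_smul_of_homogeneous hhom hs hx

variable {γ : ℝ → E} {t : ℝ}

theorem ContinuousLinearMap.deriv_comp_curve (L : E →L[ℝ] F) (hγ : DifferentiableAt ℝ γ t) :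
    deriv (fun a => L (γ a)) t = L (deriv γ t) :=
  (L.hasFDerivAt.comp_hasDerivAt t hγ.hasDerivAt).deriv

theorem ContinuousLinearMap.deriv_deriv_comp_curve (L : E →L[ℝ] F)
    (hγ : ∀ᶠ a in 𝓝 t, DifferentiableAt ℝ γ a) (hγ' : DifferentiableAt ℝ (deriv γ) t) :
    deriv (deriv fun a => L (γ a)) t = L (deriv (deriv γ) t) := by
  have hderiv : deriv (fun a => L (γ a)) =ᶠ[𝓝 t] fun a => L (deriv γ a) := by
    filter_upwards [hγ] with a ha using L.deriv_comp_curve ha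
  rw [hderiv.deriv_eq]
  exact L.deriv_comp_curve hγ'

theorem fderiv_apply_deriv_eq_zero_of_eventually_eq_const {g : E → F} {c : F}
    (hg : DifferentiableAt ℝ g (γ t)) (hγ : DifferentiableAt ℝ γ t)
    (hc : ∀ᶠ a in 𝓝 t, g (γ a) = c) :
    fderiv ℝ g (γ t) (deriv γ t) = 0 := by
  rw [← fderiv_comp_deriv t hg hγ, EventuallyEq.deriv_eq (f₁ := g ∘ γ) (f := fun _ => c) hc,
    deriv_const]

theorem fderiv_fderiv_add_fderiv_deriv_deriv_eq_zero_of_eventually_eq_const {g : E → F} {c : F}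
    (hg : ∀ᶠ a in 𝓝 t, DifferentiableAt ℝ g (γ a)) (hg' : DifferentiableAt ℝ (fderiv ℝ g) (γ t))
    (hγ : ∀ᶠ a in 𝓝 t, DifferentiableAt ℝ γ a) (hγ' : DifferentiableAt ℝ (deriv γ) t)
    (hc : ∀ᶠ a in 𝓝 t, g (γ a) = c) :
    fderiv ℝ (fderiv ℝ g) (γ t) (deriv γ t) (deriv γ t)
      + fderiv ℝ g (γ t) (deriv (deriv γ) t) = 0 := by
  have hzero : (fun a => fderiv ℝ g (γ a) (deriv γ a)) =ᶠ[𝓝 t] fun _ => 0 := by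
    filter_upwards [hg, hγ, hc.eventually_nhds] with a hga hγa hca
    exact fderiv_apply_deriv_eq_zero_of_eventually_eq_const hga hγa hca
  have hderiv := (hg'.hasFDerivAt.comp_hasDerivAt t hγ.self_of_nhds.hasDerivAt).clm_apply
    hγ'.hasDerivAt
  exact hderiv.unique ((hasDerivAt_const t 0).congr_of_eventuallyEq hzero)

end Calculus

theorem statement15_general (d : ℕ)
    (p : EuclideanSpace ℝ (Fin d) → ℝ)
    (hp : ContDiffOn ℝ 2 p {ξ : EuclideanSpace ℝ (Fin d) | ξ ≠ 0})
    (hhom : ∀ s : ℝ, 0 < s → ∀ ξ : EuclideanSpace ℝ (Fin d), ξ ≠ 0 →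
      p (s • ξ) = s * p ξ)
    (ξ₀ : EuclideanSpace ℝ (Fin d)) (hξ₀ : ξ₀ ≠ 0) (hpξ₀ : p ξ₀ = 1)
    (A : ℝ)
    (hH : ∀ w : EuclideanSpace ℝ (Fin d),
      A⁻¹ * ‖w‖ ^ 2 ≤ (1 / 2) * fderiv ℝ (fderiv ℝ (fun x => (p x) ^ 2)) ξ₀ w w)
    (ε : ℝ) (hε : 0 < ε)
    (ξ : ℝ → EuclideanSpace ℝ (Fin d))
    (hne : ∀ a ∈ Set.Ioo (-ε) ε, ξ a ≠ 0)
    (hdiff1 : ∀ a ∈ Set.Ioo (-ε) ε, DifferentiableAt ℝ ξ a)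
    (hdiff2 : ∀ a ∈ Set.Ioo (-ε) ε, DifferentiableAt ℝ (deriv ξ) a)
    (hval : ∀ a ∈ Set.Ioo (-ε) ε, p (ξ a) = 1)
    (hξ0 : ξ 0 = ξ₀) :
    ((1 : ℝ) / 2) * fderiv ℝ (fderiv ℝ (fun x => (p x) ^ 2)) ξ₀ ξ₀ (ξ 0) = 1 ∧
    deriv (fun a : ℝ =>
      ((1 : ℝ) / 2) * fderiv ℝ (fderiv ℝ (fun x => (p x) ^ 2)) ξ₀ ξ₀ (ξ a)) 0 = 0 ∧
    deriv (deriv (fun a : ℝ =>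
        ((1 : ℝ) / 2) * fderiv ℝ (fderiv ℝ (fun x => (p x) ^ 2)) ξ₀ ξ₀ (ξ a))) 0 ≤
      -(A⁻¹) * ‖deriv ξ 0‖ ^ 2 := by
  subst hξ0
  set q : EuclideanSpace ℝ (Fin d) → ℝ := fun x => p x ^ 2
  have hq2 : ∀ x ≠ 0, ContDiffAt ℝ 2 q x := fun x hx =>
    (hp.pow 2).contDiffAt (isOpen_ne.mem_nhds hx)
  have hDq : ∀ x ≠ 0, DifferentiableAt ℝ q x := fun x hx =>
    (hq2 x hx).differentiableAt two_ne_zero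
  have hD2q : ∀ x ≠ 0, DifferentiableAt ℝ (fderiv ℝ q) x := fun x hx =>
    ((hq2 x hx).fderiv_right (m := 1) le_rfl).differentiableAt one_ne_zero
  have hqhom : ∀ s : ℝ, 0 < s → ∀ x ≠ 0, q (s • x) = s ^ (2 : ℝ) • q x := by
    intro s hs x hx
    simp [q, hhom s hs x hx, mul_pow]
  have hHξ₀ : fderiv ℝ (fderiv ℝ q) (ξ 0) (ξ 0) = fderiv ℝ q (ξ 0) := by
    rw [fderiv_fderiv_apply_self_of_homogeneous hqhom hξ₀ (hD2q _ hξ₀)]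
    norm_num
  have hI : Ioo (-ε) ε ∈ 𝓝 (0 : ℝ) := Ioo_mem_nhds (neg_neg_of_pos hε) hε
  have hξ' : ∀ᶠ a in 𝓝 0, DifferentiableAt ℝ ξ a := eventually_of_mem hI hdiff1
  have hξ'' : DifferentiableAt ℝ (deriv ξ) 0 := hdiff2 0 (mem_of_mem_nhds hI)
  have hlevel : ∀ᶠ a in 𝓝 0, q (ξ a) = 1 := by
    filter_upwards [hI] with a ha
    simp [q, hval a ha]
  set L := (1 / 2 : ℝ) • fderiv ℝ q (ξ 0)
  have hc : (fun a => 1 / 2 * fderiv ℝ q (ξ 0) (ξ a)) = fun a => L (ξ a) := rfl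
  rw [hHξ₀, hc]
  refine ⟨?_, ?_, ?_⟩
  · rw [fderiv_apply_self_of_homogeneous (hDq _ hξ₀) fun s hs => hqhom s hs _ hξ₀]
    norm_num [q, hpξ₀]
  · rw [L.deriv_comp_curve hξ'.self_of_nhds, smul_apply,
      fderiv_apply_deriv_eq_zero_of_eventually_eq_const (hDq _ hξ₀) hξ'.self_of_nhds hlevel,
      smul_zero]
  · have hsecond := fderiv_fderiv_add_fderiv_deriv_deriv_eq_zero_of_eventually_eq_const
      (eventually_of_mem hI fun a ha => hDq _ (hne a ha)) (hD2q _ hξ₀) hξ' hξ'' hlevel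
    rw [L.deriv_deriv_comp_curve hξ' hξ'', smul_apply, smul_eq_mul]
    linarith [hH (deriv ξ 0)]

/-- Let `p` be a positive, positively 1-homogeneous `C²` function on `ℝ^d ∖ {0}`, let
`ξ₀` satisfy `p(ξ₀) = 1`, let `H = (1/2)∇²(p²)(ξ₀)`, and suppose
`⟨H w, w⟩ ≥ A⁻¹ |w|²` for all `w`, where `A ≥ 1`. For a twice differentiable curve `ξ`
on the unit level set of `p` with `ξ(0) = ξ₀`, the function `c(a) = ⟨H ξ₀, ξ(a)⟩`
satisfies `c(0) = 1`, `c'(0) = 0` and `c''(0) ≤ −A⁻¹ |ξ'(0)|²`. -/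
theorem statement15 (d : ℕ) (hd : 1 ≤ d)
    (p : EuclideanSpace ℝ (Fin d) → ℝ)
    (hp : ContDiffOn ℝ 2 p {ξ : EuclideanSpace ℝ (Fin d) | ξ ≠ 0})
    (hpos : ∀ ξ : EuclideanSpace ℝ (Fin d), ξ ≠ 0 → 0 < p ξ)
    (hhom : ∀ s : ℝ, 0 < s → ∀ ξ : EuclideanSpace ℝ (Fin d), ξ ≠ 0 →
      p (s • ξ) = s * p ξ)
    (ξ₀ : EuclideanSpace ℝ (Fin d)) (hξ₀ : ξ₀ ≠ 0) (hpξ₀ : p ξ₀ = 1)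
    (A : ℝ) (hA : 1 ≤ A)
    (hH : ∀ w : EuclideanSpace ℝ (Fin d),
      A⁻¹ * ‖w‖ ^ 2 ≤ (1 / 2) * fderiv ℝ (fderiv ℝ (fun x => (p x) ^ 2)) ξ₀ w w)
    (ε : ℝ) (hε : 0 < ε)
    (ξ : ℝ → EuclideanSpace ℝ (Fin d))
    (hne : ∀ a ∈ Set.Ioo (-ε) ε, ξ a ≠ 0)
    (hdiff1 : ∀ a ∈ Set.Ioo (-ε) ε, DifferentiableAt ℝ ξ a)
    (hdiff2 : ∀ a ∈ Set.Ioo (-ε) ε, DifferentiableAt ℝ (deriv ξ) a)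
    (hval : ∀ a ∈ Set.Ioo (-ε) ε, p (ξ a) = 1)
    (hξ0 : ξ 0 = ξ₀) :
    ((1 : ℝ) / 2) * fderiv ℝ (fderiv ℝ (fun x => (p x) ^ 2)) ξ₀ ξ₀ (ξ 0) = 1 ∧
    deriv (fun a : ℝ =>
      ((1 : ℝ) / 2) * fderiv ℝ (fderiv ℝ (fun x => (p x) ^ 2)) ξ₀ ξ₀ (ξ a)) 0 = 0 ∧
    deriv (deriv (fun a : ℝ =>
        ((1 : ℝ) / 2) * fderiv ℝ (fderiv ℝ (fun x => (p x) ^ 2)) ξ₀ ξ₀ (ξ a))) 0 ≤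
      -(A⁻¹) * ‖deriv ξ 0‖ ^ 2 :=
  statement15_general d p hp hhom ξ₀ hξ₀ hpξ₀ A hH ε hε ξ hne hdiff1 hdiff2 hval hξ0
end
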